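/- arXiv:2102.13198 — 8 statements merged into one kernel-verified Lean document; each statement's English description precedes it below -/
import Mathlib

section
/- Let V be a real inner product space with inner product (·,·) and a symmetric positive semidefinite bilinear form a(·,·). For any three elements u^{n+1}, u^n, u^{n-1} in V satisfying the implicit scheme (u^{n+1} - 2u^n + u^{n-1}, v) + (τ²/4) a(u^{n+1} + 2u^n + u^{n-1}, v) = 0 for all v in V (with τ > 0), the discrete energy E^{n+1/2} = ‖(u^{n+1}-u^n)/τ‖² + ‖(u^{n+1}+u^n)/2‖_a² equals E^{n-1/2} = ‖(u^n-u^{n-1})/τ‖² + ‖(u^n+u^{n-1})/2‖_a². -/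
/-!
Testing the scheme with `v = u² - u⁰` makes both terms telescope: writing
`u² - 2u¹ + u⁰ = (u² - u¹) - (u¹ - u⁰)`, `u² + 2u¹ + u⁰ = (u² + u¹) + (u¹ + u⁰)` and
`u² - u⁰ = (u² - u¹) + (u¹ - u⁰) = (u² + u¹) - (u¹ + u⁰)`, the identity
`B (x + y) (x - y) = B x x - B y y` for the symmetric forms `(·,·)` and `a` turns the scheme into
`‖u² - u¹‖² - ‖u¹ - u⁰‖² + τ²/4 (‖u² + u¹‖ₐ² - ‖u¹ + u⁰‖ₐ²) = 0`, i.e. `τ² (E^{3/2} - E^{1/2}) = 0`.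
-/

open RealInnerProductSpace

theorem LinearMap.apply_add_sub_of_symm {R M : Type*} [CommRing R] [AddCommGroup M] [Module R M]
    (B : M →ₗ[R] M →ₗ[R] R) (hB : ∀ x y, B x y = B y x) (x y : M) :
    B (x + y) (x - y) = B x x - B y y := by
  simp only [map_add, map_sub, LinearMap.add_apply, hB y x]
  ring

theorem real_inner_sub_add_eq_norm_sq_sub {V : Type*} [NormedAddCommGroup V]
    [InnerProductSpace ℝ V] (x y : V) : ⟪x - y, x + y⟫ = ‖x‖ ^ 2 - ‖y‖ ^ 2 := by
  rw [real_inner_comm, ← innerₗ_apply_apply,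
    (innerₗ V).apply_add_sub_of_symm (fun _ _ => real_inner_comm _ _)]
  simp only [innerₗ_apply_apply, real_inner_self_eq_norm_sq]

theorem energy_difference_eq_zero_of_scheme {V : Type*} [NormedAddCommGroup V]
    [InnerProductSpace ℝ V] (a : V →ₗ[ℝ] V →ₗ[ℝ] ℝ) (hsymm : ∀ x y, a x y = a y x) (τ : ℝ)
    (u0 u1 u2 : V)
    (hscheme : ⟪u2 - (2:ℝ) • u1 + u0, u2 - u0⟫ + (τ^2 / 4) * a (u2 + (2:ℝ) • u1 + u0) (u2 - u0) = 0) :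
    ‖u2 - u1‖ ^ 2 - ‖u1 - u0‖ ^ 2
      + τ ^ 2 / 4 * (a (u2 + u1) (u2 + u1) - a (u1 + u0) (u1 + u0)) = 0 := by
  have hdiff : u2 - (2:ℝ) • u1 + u0 = (u2 - u1) - (u1 - u0) := by module
  have hsum : u2 + (2:ℝ) • u1 + u0 = (u2 + u1) + (u1 + u0) := by module
  have htest : u2 - u0 = (u2 - u1) + (u1 - u0) := by abel
  have htest' : u2 - u0 = (u2 + u1) - (u1 + u0) := by abel
  rw [hdiff, htest, real_inner_sub_add_eq_norm_sq_sub, hsum, ← htest, htest',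
    a.apply_add_sub_of_symm hsymm] at hscheme
  exact hscheme

theorem stmt0_general {V : Type*} [NormedAddCommGroup V] [InnerProductSpace ℝ V]
    (a : V →ₗ[ℝ] V →ₗ[ℝ] ℝ) (hsymm : ∀ x y, a x y = a y x)
    (τ : ℝ) (hτ : 0 < τ) (u0 u1 u2 : V)
    (hscheme : ∀ v : V,
      ⟪u2 - (2:ℝ) • u1 + u0, v⟫ + (τ^2 / 4) * a (u2 + (2:ℝ) • u1 + u0) v = 0) :
    ‖(1/τ) • (u2 - u1)‖^2 + a ((1/2 : ℝ) • (u2 + u1)) ((1/2 : ℝ) • (u2 + u1))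
      = ‖(1/τ) • (u1 - u0)‖^2 + a ((1/2 : ℝ) • (u1 + u0)) ((1/2 : ℝ) • (u1 + u0)) := by
  have henergy := energy_difference_eq_zero_of_scheme a hsymm τ u0 u1 u2 (hscheme (u2 - u0))
  simp only [norm_smul, mul_pow, map_smul, LinearMap.smul_apply, smul_eq_mul, Real.norm_eq_abs,
    sq_abs]
  field_simp
  linear_combination 4 * henergy

theorem stmt0 {V : Type*} [NormedAddCommGroup V] [InnerProductSpace ℝ V]
    (a : V →ₗ[ℝ] V →ₗ[ℝ] ℝ) (hsymm : ∀ x y, a x y = a y x) (hpsd : ∀ x, 0 ≤ a x x)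
    (τ : ℝ) (hτ : 0 < τ) (u0 u1 u2 : V)
    (hscheme : ∀ v : V,
      ⟪u2 - (2:ℝ) • u1 + u0, v⟫ + (τ^2 / 4) * a (u2 + (2:ℝ) • u1 + u0) v = 0) :
    ‖(1/τ) • (u2 - u1)‖^2 + a ((1/2 : ℝ) • (u2 + u1)) ((1/2 : ℝ) • (u2 + u1))
      = ‖(1/τ) • (u1 - u0)‖^2 + a ((1/2 : ℝ) • (u1 + u0)) ((1/2 : ℝ) • (u1 + u0)) :=
  stmt0_general a hsymm τ hτ u0 u1 u2 hscheme
end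

section
/- Let V be a real inner product space with a symmetric positive semidefinite bilinear form a. For any u^{n+1}, u^n, u^{n-1} in V satisfying the explicit scheme (u^{n+1} - 2u^n + u^{n-1}, v) + τ² a(u^n, v) = 0 for all v in V, the modified discrete energy E^{n+1/2} = ‖(u^{n+1}-u^n)/τ‖² - (τ²/4)‖(u^{n+1}-u^n)/τ‖_a² + ‖(u^{n+1}+u^n)/2‖_a² equals E^{n-1/2} (the same expression with indices shifted down by one). -/
/-!
With `d₊ = u² - u¹`, `d₋ = u¹ - u⁰`, polarization of the symmetric form `a` turns the modified
energy into `‖d₊‖² / τ² + a(u², u¹)`. Testing the scheme with `v = u² - u⁰ = d₊ + d₋` gives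
`‖d₊‖² - ‖d₋‖² = -τ² a(u¹, u² - u⁰)`, which is exactly the change of that expression.
-/

open RealInnerProductSpace

theorem LinearMap.apply_add_add_sub_apply_sub_sub_of_symm {R M : Type*} [CommRing R]
    [AddCommGroup M] [Module R M] (a : M →ₗ[R] M →ₗ[R] R)
    (hsymm : ∀ x y, a x y = a y x) (x y : M) :
    a (x + y) (x + y) - a (x - y) (x - y) = 4 * a x y := by
  simp only [map_add, map_sub, LinearMap.add_apply, LinearMap.sub_apply, hsymm y x]
  ring

section

variable {V : Type*} [NormedAddCommGroup V] [InnerProductSpace ℝ V]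

/-- The modified discrete energy `E^{n+1/2}` of two consecutive iterates `x = uⁿ⁺¹`, `y = uⁿ`. -/
noncomputable def modifiedEnergy (a : V →ₗ[ℝ] V →ₗ[ℝ] ℝ) (τ : ℝ) (x y : V) : ℝ :=
  ‖(1/τ) • (x - y)‖^2 - (τ^2 / 4) * a ((1/τ) • (x - y)) ((1/τ) • (x - y))
    + a ((1/2 : ℝ) • (x + y)) ((1/2 : ℝ) • (x + y))

theorem modifiedEnergy_eq (a : V →ₗ[ℝ] V →ₗ[ℝ] ℝ) (hsymm : ∀ x y, a x y = a y x)
    {τ : ℝ} (hτ : τ ≠ 0) (x y : V) :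
    modifiedEnergy a τ x y = ‖x - y‖^2 / τ^2 + a x y := by
  have hpolar := a.apply_add_add_sub_apply_sub_sub_of_symm hsymm x y
  simp only [modifiedEnergy, norm_smul, map_smul, LinearMap.smul_apply, smul_eq_mul,
    Real.norm_eq_abs, mul_pow, sq_abs]
  field_simp
  linear_combination 4 * τ^2 * hpolar

theorem norm_sq_sub_norm_sq_of_scheme (a : V →ₗ[ℝ] V →ₗ[ℝ] ℝ) (τ : ℝ) (u0 u1 u2 : V)
    (hscheme : ∀ v : V, ⟪u2 - (2:ℝ) • u1 + u0, v⟫ + τ^2 * a u1 v = 0) :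
    ‖u2 - u1‖^2 - ‖u1 - u0‖^2 = -(τ^2 * a u1 (u2 - u0)) := by
  have hinner : ⟪u2 - (2:ℝ) • u1 + u0, u2 - u0⟫ = ‖u2 - u1‖^2 - ‖u1 - u0‖^2 := by
    have hdiff : u2 - (2:ℝ) • u1 + u0 = (u2 - u1) - (u1 - u0) := by module
    have hsum : u2 - u0 = (u2 - u1) + (u1 - u0) := by abel
    rw [hdiff, hsum, inner_sub_left, inner_add_right, inner_add_right,
      real_inner_self_eq_norm_sq, real_inner_self_eq_norm_sq, real_inner_comm (u2 - u1)]
    ring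
  linarith [hscheme (u2 - u0)]

end

theorem stmt1_general {V : Type*} [NormedAddCommGroup V] [InnerProductSpace ℝ V]
    (a : V →ₗ[ℝ] V →ₗ[ℝ] ℝ) (hsymm : ∀ x y, a x y = a y x)
    (τ : ℝ) (hτ : 0 < τ) (u0 u1 u2 : V)
    (hscheme : ∀ v : V,
      ⟪u2 - (2:ℝ) • u1 + u0, v⟫ + τ^2 * a u1 v = 0) :
    ‖(1/τ) • (u2 - u1)‖^2 - (τ^2 / 4) * a ((1/τ) • (u2 - u1)) ((1/τ) • (u2 - u1))
        + a ((1/2 : ℝ) • (u2 + u1)) ((1/2 : ℝ) • (u2 + u1))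
      = ‖(1/τ) • (u1 - u0)‖^2 - (τ^2 / 4) * a ((1/τ) • (u1 - u0)) ((1/τ) • (u1 - u0))
        + a ((1/2 : ℝ) • (u1 + u0)) ((1/2 : ℝ) • (u1 + u0)) := by
  change modifiedEnergy a τ u2 u1 = modifiedEnergy a τ u1 u0
  have hτ0 : τ ≠ 0 := hτ.ne'
  have hnorms := norm_sq_sub_norm_sq_of_scheme a τ u0 u1 u2 hscheme
  rw [modifiedEnergy_eq a hsymm hτ0, modifiedEnergy_eq a hsymm hτ0, hsymm u2 u1]
  simp only [map_sub] at hnorms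
  field_simp
  linear_combination hnorms

theorem stmt1 {V : Type*} [NormedAddCommGroup V] [InnerProductSpace ℝ V]
    (a : V →ₗ[ℝ] V →ₗ[ℝ] ℝ) (hsymm : ∀ x y, a x y = a y x) (hpsd : ∀ x, 0 ≤ a x x)
    (τ : ℝ) (hτ : 0 < τ) (u0 u1 u2 : V)
    (hscheme : ∀ v : V,
      ⟪u2 - (2:ℝ) • u1 + u0, v⟫ + τ^2 * a u1 v = 0) :
    ‖(1/τ) • (u2 - u1)‖^2 - (τ^2 / 4) * a ((1/τ) • (u2 - u1)) ((1/τ) • (u2 - u1))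
        + a ((1/2 : ℝ) • (u2 + u1)) ((1/2 : ℝ) • (u2 + u1))
      = ‖(1/τ) • (u1 - u0)‖^2 - (τ^2 / 4) * a ((1/τ) • (u1 - u0)) ((1/τ) • (u1 - u0))
        + a ((1/2 : ℝ) • (u1 + u0)) ((1/2 : ℝ) • (u1 + u0)) :=
  stmt1_general a hsymm τ hτ u0 u1 u2 hscheme
end

section
/- Let V_1 ⊥ V_2 be orthogonal subspaces (with respect to the L² inner product) of a real inner product space V, with a symmetric positive semidefinite bilinear form a, and τ > 0 such that ‖v_2‖² ≥ (τ²/2)‖v_2‖_a² for all v_2 ∈ V_2. Then the energy functional E(u_1, u_2, ū_1, ū_2) = ‖(u_1 + u_2) - (ū_1 + ū_2)‖² + (τ²/2)(‖u_1 + ū_2‖_a² + ‖ū_1 + u_2‖_a²) - (τ²/2)‖u_2 - ū_2‖_a² (with u_i, ū_i ∈ V_i) is bounded below by ‖u_1 - ū_1‖² + (τ²/2)(‖u_1‖_a² + ‖ū_1‖_a² + ‖u_2‖_a² + ‖ū_2‖_a²) + τ² a(u_2, ū_1) + τ² a(u_1, ū_2), and in particular is nonnegative. -/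
/-!
Write `x = u1 - w1 ∈ V1` and `y = u2 - w2 ∈ V2`. Orthogonality gives
`‖(u1 + u2) - (w1 + w2)‖² = ‖x‖² + ‖y‖²`, and expanding the `a`-terms by bilinearity shows that the
energy exceeds the claimed lower bound by exactly `‖y‖² - (τ²/2) ‖y‖_a²`, which is nonnegative by the
stability condition. The lower bound itself equals
`‖x‖² + (τ²/2) (‖u1 + w2‖_a² + ‖w1 + u2‖_a²)`, hence is nonnegative.
-/

open RealInnerProductSpace

section SymmBilin

variable {V : Type*} [AddCommGroup V] [Module ℝ V] {a : V →ₗ[ℝ] V →ₗ[ℝ] ℝ}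

lemma apply_add_add_self_of_symm (hsymm : ∀ x y, a x y = a y x) (x y : V) :
    a (x + y) (x + y) = a x x + 2 * a x y + a y y := by
  simp only [map_add, LinearMap.add_apply, hsymm y x]
  ring

lemma apply_sub_sub_self_of_symm (hsymm : ∀ x y, a x y = a y x) (x y : V) :
    a (x - y) (x - y) = a x x - 2 * a x y + a y y := by
  simp only [map_sub, LinearMap.sub_apply, hsymm y x]
  ring

end SymmBilin

lemma norm_add_sub_add_sq_of_inner_sub_eq_zero {V : Type*} [NormedAddCommGroup V]
    [InnerProductSpace ℝ V] {u1 w1 u2 w2 : V} (h : ⟪u1 - w1, u2 - w2⟫ = 0) :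
    ‖(u1 + u2) - (w1 + w2)‖ ^ 2 = ‖u1 - w1‖ ^ 2 + ‖u2 - w2‖ ^ 2 := by
  rw [add_sub_add_comm, norm_add_sq_real, h]
  ring

theorem stmt6_general {V : Type*} [NormedAddCommGroup V] [InnerProductSpace ℝ V]
    (V1 V2 : Submodule ℝ V)
    (horth : ∀ v1 ∈ V1, ∀ v2 ∈ V2, ⟪v1, v2⟫ = 0)
    (a : V →ₗ[ℝ] V →ₗ[ℝ] ℝ) (hsymm : ∀ x y, a x y = a y x) (hpsd : ∀ x, 0 ≤ a x x)
    (τ : ℝ)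
    (hstab : ∀ v2 ∈ V2, ‖v2‖^2 ≥ (τ^2 / 2) * a v2 v2) :
    ∀ u1 ∈ V1, ∀ w1 ∈ V1, ∀ u2 ∈ V2, ∀ w2 ∈ V2,
      (‖(u1 + u2) - (w1 + w2)‖^2
          + (τ^2 / 2) * (a (u1 + w2) (u1 + w2) + a (w1 + u2) (w1 + u2))
          - (τ^2 / 2) * a (u2 - w2) (u2 - w2)
        ≥ ‖u1 - w1‖^2
          + (τ^2 / 2) * (a u1 u1 + a w1 w1 + a u2 u2 + a w2 w2)
          + τ^2 * a u2 w1 + τ^2 * a u1 w2) ∧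
      0 ≤ ‖(u1 + u2) - (w1 + w2)‖^2
          + (τ^2 / 2) * (a (u1 + w2) (u1 + w2) + a (w1 + u2) (w1 + u2))
          - (τ^2 / 2) * a (u2 - w2) (u2 - w2) := by
  intro u1 hu1 w1 hw1 u2 hu2 w2 hw2
  have hpyth := norm_add_sub_add_sq_of_inner_sub_eq_zero
    (horth _ (sub_mem hu1 hw1) _ (sub_mem hu2 hw2))
  have hstab_diff := hstab _ (sub_mem hu2 hw2)
  have hpsd_sum : 0 ≤ (τ ^ 2 / 2) * (a (u1 + w2) (u1 + w2) + a (w1 + u2) (w1 + u2)) :=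
    mul_nonneg (by positivity) (add_nonneg (hpsd _) (hpsd _))
  simp only [apply_add_add_self_of_symm hsymm, apply_sub_sub_self_of_symm hsymm, hsymm w1 u2]
    at hpsd_sum hstab_diff ⊢
  constructor <;> linarith [sq_nonneg ‖u1 - w1‖]

theorem stmt6 {V : Type*} [NormedAddCommGroup V] [InnerProductSpace ℝ V]
    (V1 V2 : Submodule ℝ V)
    (horth : ∀ v1 ∈ V1, ∀ v2 ∈ V2, ⟪v1, v2⟫ = 0)
    (a : V →ₗ[ℝ] V →ₗ[ℝ] ℝ) (hsymm : ∀ x y, a x y = a y x) (hpsd : ∀ x, 0 ≤ a x x)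
    (τ : ℝ) (hτ : 0 < τ)
    (hstab : ∀ v2 ∈ V2, ‖v2‖^2 ≥ (τ^2 / 2) * a v2 v2) :
    ∀ u1 ∈ V1, ∀ w1 ∈ V1, ∀ u2 ∈ V2, ∀ w2 ∈ V2,
      (‖(u1 + u2) - (w1 + w2)‖^2
          + (τ^2 / 2) * (a (u1 + w2) (u1 + w2) + a (w1 + u2) (w1 + u2))
          - (τ^2 / 2) * a (u2 - w2) (u2 - w2)
        ≥ ‖u1 - w1‖^2
          + (τ^2 / 2) * (a u1 u1 + a w1 w1 + a u2 u2 + a w2 w2)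
          + τ^2 * a u2 w1 + τ^2 * a u1 w2) ∧
      0 ≤ ‖(u1 + u2) - (w1 + w2)‖^2
          + (τ^2 / 2) * (a (u1 + w2) (u1 + w2) + a (w1 + u2) (w1 + u2))
          - (τ^2 / 2) * a (u2 - w2) (u2 - w2) :=
  stmt6_general V1 V2 horth a hsymm hpsd τ hstab
end

section
/- Let V_1, V_2 be subspaces of a real inner product space with γ = sup over nonzero v_1 ∈ V_1, v_2 ∈ V_2 of (v_1, v_2)/(‖v_1‖‖v_2‖) < 1. Then for all u_1, ū_1 ∈ V_1 and u_2, ū_2 ∈ V_2: ‖(u_1 + u_2) - (ū_1 + ū_2)‖² ≥ (1 - γ²)‖u_2 - ū_2‖². -/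
open RealInnerProductSpace

theorem norm_add_sq_ge_of_neg_inner_le {V : Type*} [NormedAddCommGroup V] [InnerProductSpace ℝ V]
    {a b : V} {γ : ℝ} (h : -⟪a, b⟫ ≤ γ * ‖a‖ * ‖b‖) :
    (1 - γ ^ 2) * ‖b‖ ^ 2 ≤ ‖a + b‖ ^ 2 := by
  -- ‖a + b‖² ≥ ‖a‖² - 2γ‖a‖‖b‖ + ‖b‖² = (‖a‖ - γ‖b‖)² + (1 - γ²)‖b‖²
  rw [norm_add_sq_real]
  nlinarith [sq_nonneg (‖a‖ - γ * ‖b‖)]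

theorem stmt7_general {V : Type*} [NormedAddCommGroup V] [InnerProductSpace ℝ V]
    (V1 V2 : Submodule ℝ V) (γ : ℝ)
    (hγ : ∀ v1 ∈ V1, ∀ v2 ∈ V2, ⟪v1, v2⟫ ≤ γ * ‖v1‖ * ‖v2‖) :
    ∀ u1 ∈ V1, ∀ w1 ∈ V1, ∀ u2 ∈ V2, ∀ w2 ∈ V2,
      ‖(u1 + u2) - (w1 + w2)‖^2 ≥ (1 - γ^2) * ‖u2 - w2‖^2 := by
  intro u1 hu1 w1 hw1 u2 hu2 w2 hw2
  have hcos : -⟪u1 - w1, u2 - w2⟫ ≤ γ * ‖u1 - w1‖ * ‖u2 - w2‖ := by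
    simpa only [inner_neg_left, norm_neg] using
      hγ _ (V1.neg_mem (V1.sub_mem hu1 hw1)) _ (V2.sub_mem hu2 hw2)
  rw [add_sub_add_comm]
  exact norm_add_sq_ge_of_neg_inner_le hcos

theorem stmt7 {V : Type*} [NormedAddCommGroup V] [InnerProductSpace ℝ V]
    (V1 V2 : Submodule ℝ V) (γ : ℝ) (hγ1 : γ < 1)
    (hγ : ∀ v1 ∈ V1, ∀ v2 ∈ V2, ⟪v1, v2⟫ ≤ γ * ‖v1‖ * ‖v2‖) :
    ∀ u1 ∈ V1, ∀ w1 ∈ V1, ∀ u2 ∈ V2, ∀ w2 ∈ V2,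
      ‖(u1 + u2) - (w1 + w2)‖^2 ≥ (1 - γ^2) * ‖u2 - w2‖^2 :=
  stmt7_general V1 V2 γ hγ
end

section
/- With the operators b_τ, c_τ, d_τ and (semi)norms ‖·‖_{m_τ}, ‖·‖_{s_τ}, ‖·‖_{n_τ} defined as below, for every v_2 ∈ V_2 one has the identity ‖v_2‖_{n_τ}² = (τ²/2)‖v_2 - d_τ(v_2)‖_a², i.e. (τ²/2)‖v_2‖_a² - ‖c_τ(v_2)‖_{m_τ}² - ‖d_τ(v_2)‖_{s_τ}² = (τ²/2)‖v_2 - d_τ(v_2)‖_a². In particular ‖v_2‖_{n_τ}² ≥ 0. -/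
/-!
Write `m(u, v) = ⟪u, v⟫ + t a(u, v)` with `t = τ² / 2`, and `δ = d v₂`, `β = b δ`, `γ = c v₂`.
Testing against `v ∈ V₁`, `m(γ + β - δ, v) = t a(v₂ - δ, v) = 0`, and `m` is definite,
so `γ = δ - β`. Expanding `m(δ - β, δ - β)` with `m(β, δ) = ⟪δ, δ⟫` turns the left-hand side into
`t (a(v₂, v₂) - a(δ, δ))`, which is `t a(v₂ - δ, v₂ - δ)` by Pythagoras for the `a`-orthogonal
projection `δ`.
-/

open RealInnerProductSpace

section MassForm

variable {V : Type*} [NormedAddCommGroup V] [InnerProductSpace ℝ V]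
  (a : V →ₗ[ℝ] V →ₗ[ℝ] ℝ) {t : ℝ}

theorem eq_zero_of_inner_self_add_mul_apply_self_eq_zero {w : V} (ht : 0 ≤ t)
    (ha : 0 ≤ a w w) (h : ⟪w, w⟫ + t * a w w = 0) : w = 0 := by
  have hinner : ⟪w, w⟫ = 0 := by
    nlinarith [real_inner_self_nonneg (x := w), mul_nonneg ht ha]
  exact inner_self_eq_zero.mp hinner

variable {V₁ : Submodule ℝ V}

theorem eq_sub_of_inner_add_mul_apply_eq (ht : 0 ≤ t) (ha : ∀ w, 0 ≤ a w w)
    {u γ δ β : V} (hγ : γ ∈ V₁) (hδ : δ ∈ V₁) (hβ : β ∈ V₁)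
    (hc : ∀ v ∈ V₁, ⟪γ, v⟫ + t * a γ v = t * a u v)
    (hd : ∀ v ∈ V₁, a δ v = a u v)
    (hb : ∀ v ∈ V₁, ⟪β, v⟫ + t * a β v = ⟪δ, v⟫) :
    γ = δ - β := by
  obtain ⟨w, hw_def⟩ : ∃ w, w = γ + β - δ := ⟨_, rfl⟩
  have hw : w ∈ V₁ := hw_def ▸ sub_mem (add_mem hγ hβ) hδ
  have hmw : ⟪w, w⟫ + t * a w w = 0 :=
    calc ⟪w, w⟫ + t * a w w = ⟪γ + β - δ, w⟫ + t * a (γ + β - δ) w := by rw [← hw_def]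
      _ = 0 := by
        simp only [inner_add_left, inner_sub_left, map_add, map_sub, LinearMap.add_apply,
          LinearMap.sub_apply]
        linear_combination hc w hw + hb w hw - t * hd w hw
  rw [eq_sub_iff_add_eq, ← sub_eq_zero, ← hw_def]
  exact eq_zero_of_inner_self_add_mul_apply_self_eq_zero a ht (ha w) hmw

variable {a}

theorem inner_add_mul_apply_sub_sub (hsymm : ∀ x y, a x y = a y x) {δ β : V}
    (hβ : ⟪β, δ⟫ + t * a β δ = ⟪δ, δ⟫) :
    ⟪δ - β, δ - β⟫ + t * a (δ - β) (δ - β)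
      = t * a δ δ - ⟪δ, δ⟫ + (⟪β, β⟫ + t * a β β) := by
  simp only [map_sub, LinearMap.sub_apply, inner_sub_left, inner_sub_right]
  linear_combination -2 * hβ + real_inner_comm δ β + t * hsymm β δ

theorem apply_sub_sub_of_apply_sub_eq_zero (hsymm : ∀ x y, a x y = a y x) {u δ : V}
    (h : a (u - δ) δ = 0) :
    a (u - δ) (u - δ) = a u u - a δ δ := by
  simp only [map_sub, LinearMap.sub_apply] at h ⊢
  linear_combination -hsymm δ u - 2 * h

end MassForm

theorem stmt11_general {V : Type*} [NormedAddCommGroup V] [InnerProductSpace ℝ V]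
    (a : V →ₗ[ℝ] V →ₗ[ℝ] ℝ) (hsymm : ∀ x y, a x y = a y x)
    (hpd : ∀ v : V, v ≠ 0 → 0 < a v v)
    (τ : ℝ)
    (V1 V2 : Submodule ℝ V) (b c d : V → V)
    (hbmem : ∀ v1 ∈ V1, b v1 ∈ V1)
    (hb : ∀ v1 ∈ V1, ∀ v ∈ V1,
      ⟪b v1, v⟫ + (τ^2 / 2) * a (b v1) v = ⟪v1, v⟫)
    (hcmem : ∀ u ∈ V1 ⊔ V2, c u ∈ V1)
    (hc : ∀ u ∈ V1 ⊔ V2, ∀ v ∈ V1,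
      ⟪c u, v⟫ + (τ^2 / 2) * a (c u) v = (τ^2 / 2) * a u v)
    (hdmem : ∀ u ∈ V1 ⊔ V2, d u ∈ V1)
    (hd : ∀ u ∈ V1 ⊔ V2, ∀ v ∈ V1, a (d u) v = a u v) :
    ∀ v2 ∈ V2,
      ((τ^2 / 2) * a v2 v2
          - (⟪c v2, c v2⟫ + (τ^2 / 2) * a (c v2) (c v2))
          - (⟪d v2, d v2⟫
              - (⟪b (d v2), b (d v2)⟫ + (τ^2 / 2) * a (b (d v2)) (b (d v2))))
        = (τ^2 / 2) * a (v2 - d v2) (v2 - d v2)) ∧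
      0 ≤ (τ^2 / 2) * a v2 v2
          - (⟪c v2, c v2⟫ + (τ^2 / 2) * a (c v2) (c v2))
          - (⟪d v2, d v2⟫
              - (⟪b (d v2), b (d v2)⟫ + (τ^2 / 2) * a (b (d v2)) (b (d v2)))) := by
  intro v2 hv2
  have hv2' : v2 ∈ V1 ⊔ V2 := Submodule.mem_sup_right hv2
  have hdm : d v2 ∈ V1 := hdmem _ hv2'
  have ht : 0 ≤ τ ^ 2 / 2 := by positivity
  have ha : ∀ w, 0 ≤ a w w := fun w ↦ by
    rcases eq_or_ne w 0 with rfl | hw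
    · simp
    · exact (hpd w hw).le
  have hcdb : c v2 = d v2 - b (d v2) :=
    eq_sub_of_inner_add_mul_apply_eq a ht ha (hcmem _ hv2') hdm (hbmem _ hdm)
      (hc _ hv2') (hd _ hv2') (hb _ hdm)
  have hpyth : a (v2 - d v2) (v2 - d v2) = a v2 v2 - a (d v2) (d v2) :=
    apply_sub_sub_of_apply_sub_eq_zero hsymm <| by
      rw [map_sub, LinearMap.sub_apply, hd _ hv2' _ hdm, sub_self]
  have hid : (τ^2 / 2) * a v2 v2
      - (⟪c v2, c v2⟫ + (τ^2 / 2) * a (c v2) (c v2))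
      - (⟪d v2, d v2⟫
          - (⟪b (d v2), b (d v2)⟫ + (τ^2 / 2) * a (b (d v2)) (b (d v2))))
      = (τ^2 / 2) * a (v2 - d v2) (v2 - d v2) := by
    rw [hcdb, inner_add_mul_apply_sub_sub hsymm (hb _ hdm _ hdm), hpyth]
    ring
  exact ⟨hid, hid ▸ mul_nonneg ht (ha _)⟩

theorem stmt11 {V : Type*} [NormedAddCommGroup V] [InnerProductSpace ℝ V]
    [FiniteDimensional ℝ V]
    (a : V →ₗ[ℝ] V →ₗ[ℝ] ℝ) (hsymm : ∀ x y, a x y = a y x)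
    (hpd : ∀ v : V, v ≠ 0 → 0 < a v v)
    (τ : ℝ) (hτ : 0 < τ)
    (V1 V2 : Submodule ℝ V) (b c d : V → V)
    (hbmem : ∀ v1 ∈ V1, b v1 ∈ V1)
    (hb : ∀ v1 ∈ V1, ∀ v ∈ V1,
      ⟪b v1, v⟫ + (τ^2 / 2) * a (b v1) v = ⟪v1, v⟫)
    (hcmem : ∀ u ∈ V1 ⊔ V2, c u ∈ V1)
    (hc : ∀ u ∈ V1 ⊔ V2, ∀ v ∈ V1,
      ⟪c u, v⟫ + (τ^2 / 2) * a (c u) v = (τ^2 / 2) * a u v)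
    (hdmem : ∀ u ∈ V1 ⊔ V2, d u ∈ V1)
    (hd : ∀ u ∈ V1 ⊔ V2, ∀ v ∈ V1, a (d u) v = a u v) :
    ∀ v2 ∈ V2,
      ((τ^2 / 2) * a v2 v2
          - (⟪c v2, c v2⟫ + (τ^2 / 2) * a (c v2) (c v2))
          - (⟪d v2, d v2⟫
              - (⟪b (d v2), b (d v2)⟫ + (τ^2 / 2) * a (b (d v2)) (b (d v2))))
        = (τ^2 / 2) * a (v2 - d v2) (v2 - d v2)) ∧
      0 ≤ (τ^2 / 2) * a v2 v2
          - (⟪c v2, c v2⟫ + (τ^2 / 2) * a (c v2) (c v2))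
          - (⟪d v2, d v2⟫
              - (⟪b (d v2), b (d v2)⟫ + (τ^2 / 2) * a (b (d v2)) (b (d v2)))) :=
  stmt11_general a hsymm hpd τ V1 V2 b c d hbmem hb hcmem hc hdmem hd
end

section
/- With the definitions below, for all u_1 ∈ V_1 and u_2 ∈ V_2 the cross-term identity (u_1, d_τ(u_2))_{s_τ} = (b_τ(u_1), c_τ(u_2))_{m_τ} holds, where (v_1, v)_{s_τ} = (v_1, v) - (b_τ(v_1), b_τ(v))_{m_τ}. -/
/-!
Test the defining equations of `b_τ`, `c_τ`, `d_τ` against `b_τ(u₁)` and `d_τ(u₂)`: the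
left-hand side becomes `(b_τ(u₁), d_τ(u₂))_{m_τ} - (d_τ(u₂), b_τ(u₁))`, and both sides reduce
to `(τ²/2) a(u₂, b_τ(u₁))`.
-/

open RealInnerProductSpace

section MTauInner

variable {V : Type*} [NormedAddCommGroup V] [InnerProductSpace ℝ V]

noncomputable def mTauInner (a : V →ₗ[ℝ] V →ₗ[ℝ] ℝ) (τ : ℝ) (x y : V) : ℝ :=
  ⟪x, y⟫ + (τ ^ 2 / 2) * a x y

variable {a : V →ₗ[ℝ] V →ₗ[ℝ] ℝ} {τ : ℝ}

theorem mTauInner_comm (hsymm : ∀ x y, a x y = a y x) (x y : V) :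
    mTauInner a τ x y = mTauInner a τ y x := by
  rw [mTauInner, mTauInner, real_inner_comm, hsymm]

theorem mTauInner_sub_inner (x y : V) :
    mTauInner a τ x y - ⟪x, y⟫ = (τ ^ 2 / 2) * a x y :=
  add_sub_cancel_left _ _

end MTauInner

theorem stmt13_general {V : Type*} [NormedAddCommGroup V] [InnerProductSpace ℝ V]
    (a : V →ₗ[ℝ] V →ₗ[ℝ] ℝ) (hsymm : ∀ x y, a x y = a y x)
    (τ : ℝ)
    (V1 V2 : Submodule ℝ V) (b c d : V → V)
    (hbmem : ∀ v1 ∈ V1, b v1 ∈ V1)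
    (hb : ∀ v1 ∈ V1, ∀ v ∈ V1,
      ⟪b v1, v⟫ + (τ^2 / 2) * a (b v1) v = ⟪v1, v⟫)
    (hc : ∀ u ∈ V1 ⊔ V2, ∀ v ∈ V1,
      ⟪c u, v⟫ + (τ^2 / 2) * a (c u) v = (τ^2 / 2) * a u v)
    (hdmem : ∀ u ∈ V1 ⊔ V2, d u ∈ V1)
    (hd : ∀ u ∈ V1 ⊔ V2, ∀ v ∈ V1, a (d u) v = a u v) :
    ∀ u1 ∈ V1, ∀ u2 ∈ V2,
      ⟪u1, d u2⟫
          - (⟪b u1, b (d u2)⟫ + (τ^2 / 2) * a (b u1) (b (d u2)))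
        = ⟪b u1, c u2⟫ + (τ^2 / 2) * a (b u1) (c u2) := by
  intro u1 hu1 u2 hu2
  have hu2' : u2 ∈ V1 ⊔ V2 := Submodule.mem_sup_right hu2
  have hbu1 : b u1 ∈ V1 := hbmem u1 hu1
  have hdu2 : d u2 ∈ V1 := hdmem u2 hu2'
  have hb_u1 : mTauInner a τ (b u1) (d u2) = ⟪u1, d u2⟫ := hb u1 hu1 (d u2) hdu2
  have hb_du2 : mTauInner a τ (b (d u2)) (b u1) = ⟪d u2, b u1⟫ := hb (d u2) hdu2 (b u1) hbu1
  have hc_u2 : mTauInner a τ (c u2) (b u1) = (τ ^ 2 / 2) * a u2 (b u1) := hc u2 hu2' (b u1) hbu1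
  change ⟪u1, d u2⟫ - mTauInner a τ (b u1) (b (d u2)) = mTauInner a τ (b u1) (c u2)
  calc ⟪u1, d u2⟫ - mTauInner a τ (b u1) (b (d u2))
      = mTauInner a τ (b u1) (d u2) - ⟪b u1, d u2⟫ := by
        rw [hb_u1, mTauInner_comm hsymm, hb_du2, real_inner_comm (b u1)]
    _ = (τ ^ 2 / 2) * a (d u2) (b u1) := by rw [mTauInner_sub_inner, hsymm]
    _ = (τ ^ 2 / 2) * a u2 (b u1) := by rw [hd u2 hu2' (b u1) hbu1]
    _ = mTauInner a τ (b u1) (c u2) := by rw [mTauInner_comm hsymm, hc_u2]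

theorem stmt13 {V : Type*} [NormedAddCommGroup V] [InnerProductSpace ℝ V]
    [FiniteDimensional ℝ V]
    (a : V →ₗ[ℝ] V →ₗ[ℝ] ℝ) (hsymm : ∀ x y, a x y = a y x)
    (hpd : ∀ v : V, v ≠ 0 → 0 < a v v)
    (τ : ℝ) (hτ : 0 < τ)
    (V1 V2 : Submodule ℝ V) (b c d : V → V)
    (hbmem : ∀ v1 ∈ V1, b v1 ∈ V1)
    (hb : ∀ v1 ∈ V1, ∀ v ∈ V1,
      ⟪b v1, v⟫ + (τ^2 / 2) * a (b v1) v = ⟪v1, v⟫)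
    (hcmem : ∀ u ∈ V1 ⊔ V2, c u ∈ V1)
    (hc : ∀ u ∈ V1 ⊔ V2, ∀ v ∈ V1,
      ⟪c u, v⟫ + (τ^2 / 2) * a (c u) v = (τ^2 / 2) * a u v)
    (hdmem : ∀ u ∈ V1 ⊔ V2, d u ∈ V1)
    (hd : ∀ u ∈ V1 ⊔ V2, ∀ v ∈ V1, a (d u) v = a u v) :
    ∀ u1 ∈ V1, ∀ u2 ∈ V2,
      ⟪u1, d u2⟫
          - (⟪b u1, b (d u2)⟫ + (τ^2 / 2) * a (b u1) (b (d u2)))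
        = ⟪b u1, c u2⟫ + (τ^2 / 2) * a (b u1) (c u2) :=
  stmt13_general a hsymm τ V1 V2 b c d hbmem hb hc hdmem hd
end

section
/- With the definitions below, for every v_2 ∈ V_2 one has (c_τ(v_2), c_τ(v_2))_{m_τ} = (τ²/2) a(d_τ(v_2) - b_τ(d_τ(v_2)), d_τ(v_2)). -/
/-!
Write `x = d_τ(v₂)`. For `v ∈ V₁` the defining identities of `b_τ`, `c_τ` and `d_τ` give
`(x - b_τ x, v)_{m_τ} = (x, v) + (τ²/2) a(x, v) - (x, v) = (τ²/2) a(v₂, v) = (c_τ v₂, v)_{m_τ}`,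
and `m_τ` is positive definite on `V₁`, so `c_τ(v₂) = x - b_τ(x)`. Testing the definition of
`c_τ(v₂)` against `c_τ(v₂)` itself and using the symmetry of `a` gives the identity.
-/

open RealInnerProductSpace

section MassForm

variable {V : Type*} [NormedAddCommGroup V] [InnerProductSpace ℝ V]
  (a : V →ₗ[ℝ] V →ₗ[ℝ] ℝ) (τ : ℝ)

/-- The paper's `(·, ·)_{m_τ}`. -/
noncomputable def massForm : V →ₗ[ℝ] V →ₗ[ℝ] ℝ := innerₗ V + (τ ^ 2 / 2) • a

theorem massForm_apply (u v : V) : massForm a τ u v = ⟪u, v⟫ + τ ^ 2 / 2 * a u v := rfl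

variable {a}

theorem eq_zero_of_massForm_self_eq_zero (ha : ∀ v, 0 ≤ a v v) {w : V}
    (hw : massForm a τ w w = 0) : w = 0 := by
  have hinner : ⟪w, w⟫ = 0 := by
    rw [massForm_apply] at hw
    have : 0 ≤ τ ^ 2 / 2 * a w w := mul_nonneg (by positivity) (ha w)
    linarith [real_inner_self_nonneg (x := w)]
  exact inner_self_eq_zero.mp hinner

theorem eq_of_forall_massForm_eq (ha : ∀ v, 0 ≤ a v v) {W : Submodule ℝ V} {w w' : V}
    (hw : w ∈ W) (hw' : w' ∈ W) (h : ∀ v ∈ W, massForm a τ w v = massForm a τ w' v) :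
    w = w' := by
  rw [← sub_eq_zero]
  apply eq_zero_of_massForm_self_eq_zero τ ha
  rw [LinearMap.map_sub₂, h _ (W.sub_mem hw hw'), sub_self]

theorem eq_sub_of_forall_massForm_eq (ha : ∀ v, 0 ≤ a v v) {W : Submodule ℝ V} {x y z : V}
    (hx : x ∈ W) (hy : y ∈ W) (hz : z ∈ W)
    (hz' : ∀ v ∈ W, massForm a τ z v = ⟪x, v⟫)
    (hy' : ∀ v ∈ W, massForm a τ y v = τ ^ 2 / 2 * a x v) :
    y = x - z := by
  refine eq_of_forall_massForm_eq τ ha hy (W.sub_mem hx hz) fun v hv => ?_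
  rw [hy' v hv, LinearMap.map_sub₂, hz' v hv, massForm_apply]
  ring

end MassForm

theorem stmt14_general {V : Type*} [NormedAddCommGroup V] [InnerProductSpace ℝ V]
    (a : V →ₗ[ℝ] V →ₗ[ℝ] ℝ) (hsymm : ∀ x y, a x y = a y x)
    (hpd : ∀ v : V, v ≠ 0 → 0 < a v v)
    (τ : ℝ)
    (V1 V2 : Submodule ℝ V) (b c d : V → V)
    (hbmem : ∀ v1 ∈ V1, b v1 ∈ V1)
    (hb : ∀ v1 ∈ V1, ∀ v ∈ V1,
      ⟪b v1, v⟫ + (τ^2 / 2) * a (b v1) v = ⟪v1, v⟫)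
    (hcmem : ∀ u ∈ V1 ⊔ V2, c u ∈ V1)
    (hc : ∀ u ∈ V1 ⊔ V2, ∀ v ∈ V1,
      ⟪c u, v⟫ + (τ^2 / 2) * a (c u) v = (τ^2 / 2) * a u v)
    (hdmem : ∀ u ∈ V1 ⊔ V2, d u ∈ V1)
    (hd : ∀ u ∈ V1 ⊔ V2, ∀ v ∈ V1, a (d u) v = a u v) :
    ∀ v2 ∈ V2,
      ⟪c v2, c v2⟫ + (τ^2 / 2) * a (c v2) (c v2)
        = (τ^2 / 2) * a (d v2 - b (d v2)) (d v2) := by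
  intro v2 hv2
  have hu : v2 ∈ V1 ⊔ V2 := Submodule.mem_sup_right hv2
  have ha : ∀ v, 0 ≤ a v v := fun v => by
    rcases eq_or_ne v 0 with rfl | hv
    · simp
    · exact (hpd v hv).le
  set x := d v2
  have hx : x ∈ V1 := hdmem v2 hu
  have hcv : ∀ v ∈ V1, massForm a τ (c v2) v = τ ^ 2 / 2 * a x v := fun v hv => by
    rw [massForm_apply, hc v2 hu v hv, hd v2 hu v hv]
  have hceq : c v2 = x - b x :=
    eq_sub_of_forall_massForm_eq τ ha hx (hcmem v2 hu) (hbmem x hx) (hb x hx) hcv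
  calc ⟪c v2, c v2⟫ + τ ^ 2 / 2 * a (c v2) (c v2)
      = τ ^ 2 / 2 * a x (c v2) := hcv _ (hcmem v2 hu)
    _ = τ ^ 2 / 2 * a (x - b x) x := by rw [hsymm, ← hceq]

theorem stmt14 {V : Type*} [NormedAddCommGroup V] [InnerProductSpace ℝ V]
    [FiniteDimensional ℝ V]
    (a : V →ₗ[ℝ] V →ₗ[ℝ] ℝ) (hsymm : ∀ x y, a x y = a y x)
    (hpd : ∀ v : V, v ≠ 0 → 0 < a v v)
    (τ : ℝ) (hτ : 0 < τ)
    (V1 V2 : Submodule ℝ V) (b c d : V → V)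
    (hbmem : ∀ v1 ∈ V1, b v1 ∈ V1)
    (hb : ∀ v1 ∈ V1, ∀ v ∈ V1,
      ⟪b v1, v⟫ + (τ^2 / 2) * a (b v1) v = ⟪v1, v⟫)
    (hcmem : ∀ u ∈ V1 ⊔ V2, c u ∈ V1)
    (hc : ∀ u ∈ V1 ⊔ V2, ∀ v ∈ V1,
      ⟪c u, v⟫ + (τ^2 / 2) * a (c u) v = (τ^2 / 2) * a u v)
    (hdmem : ∀ u ∈ V1 ⊔ V2, d u ∈ V1)
    (hd : ∀ u ∈ V1 ⊔ V2, ∀ v ∈ V1, a (d u) v = a u v) :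
    ∀ v2 ∈ V2,
      ⟪c v2, c v2⟫ + (τ^2 / 2) * a (c v2) (c v2)
        = (τ^2 / 2) * a (d v2 - b (d v2)) (d v2) :=
  stmt14_general a hsymm hpd τ V1 V2 b c d hbmem hb hcmem hc hdmem hd
end

section
/- Let V be a real inner product space, a a symmetric positive semidefinite bilinear form, and suppose the three-layer weighted scheme (u^{n+1}-2u^n+u^{n-1}, v)/τ² + a(σu^{n+1}+(1-2σ)u^n+σu^{n-1}, v) = 0 holds for all v ∈ V with σ ≥ 1/4. Then, writing r^n = (u^n - u^{n-1})/τ and s^n = (u^n + u^{n-1})/2, the quantity E^{n+1/2} = ‖r^{n+1}‖² + (σ - 1/4)τ²‖r^{n+1}‖_a² + ‖s^{n+1}‖_a² is conserved: E^{n+1/2} = E^{n-1/2}; consequently, for σ ≥ 1/4 the scheme is unconditionally stable (E^{n+1/2} ≥ ‖r^{n+1}‖² for all n and τ > 0). -/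
open RealInnerProductSpace

theorem stmt17 {V : Type*} [NormedAddCommGroup V] [InnerProductSpace ℝ V]
    (a : V →ₗ[ℝ] V →ₗ[ℝ] ℝ) (hsymm : ∀ x y, a x y = a y x) (hpsd : ∀ x, 0 ≤ a x x)
    (τ : ℝ) (hτ : 0 < τ) (σ : ℝ) (hσ : σ ≥ 1/4)
    (u : ℤ → V)
    (hscheme : ∀ n : ℤ, ∀ v : V,
      ⟪u (n+1) - (2:ℝ) • u n + u (n-1), v⟫
        + τ^2 * a (σ • u (n+1) + (1 - 2*σ) • u n + σ • u (n-1)) v = 0) :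
    let r : ℤ → V := fun n => (1/τ) • (u n - u (n-1))
    let s : ℤ → V := fun n => (1/2 : ℝ) • (u n + u (n-1))
    let E : ℤ → ℝ := fun n =>
      ‖r (n+1)‖^2 + (σ - 1/4) * τ^2 * a (r (n+1)) (r (n+1)) + a (s (n+1)) (s (n+1))
    (∀ n : ℤ, E n = E (n-1)) ∧ (∀ n : ℤ, E n ≥ ‖r (n+1)‖^2) := by
  intro r s E
  have hτ0 : τ ≠ 0 := ne_of_gt hτ
  constructor
  · intro n
    have H := hscheme n (u (n+1) - u (n-1))
    simp only [E, r, s, sub_add_cancel, add_sub_cancel_right]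
    rw [← real_inner_self_eq_norm_sq, ← real_inner_self_eq_norm_sq]
    simp only [inner_sub_left, inner_sub_right, inner_add_left, inner_add_right,
      real_inner_smul_left, real_inner_smul_right, map_add, map_sub, map_smul,
      LinearMap.add_apply, LinearMap.sub_apply, LinearMap.smul_apply, smul_eq_mul] at H ⊢
    linear_combination (norm := (field_simp; ring1)) (1/τ^2) * H
      - (1/τ^2) * real_inner_comm (u n) (u (n+1))
      - (1/τ^2) * real_inner_comm (u (n-1)) (u n)
      - (1/τ^2) * real_inner_comm (u (n+1)) (u (n-1))
      + (1/2 - σ) * hsymm (u (n+1)) (u n)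
      + (σ - 1/2) * hsymm (u (n-1)) (u n)
      + σ * hsymm (u (n+1)) (u (n-1))
  · intro n
    have h1 := hpsd (r (n+1))
    have h2 := hpsd (s (n+1))
    have h3 : 0 ≤ (σ - 1/4) * τ^2 * a (r (n+1)) (r (n+1)) := by
      apply mul_nonneg (mul_nonneg (by linarith) (by positivity)) h1
    simp only [E]
    linarith
end
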